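/- (Theorem 1) For every λ ∈ [0,1], the unsharp spin observables X^λ, Y^λ, Z^λ are jointly measurable on antiparallel spin pairs: there exists a family of positive semidefinite 4×4 complex matrices {π_{[i,j,k]}}_{i,j,k∈{±1}} with Σ_{i,j,k} π_{[i,j,k]} = I⊗I, such that for every m ∈ ℝ³ with ‖m‖ ≤ 1: Σ_{j,k} Tr[π_{[i,j,k]} (ρ_m ⊗ ρ_{−m})] = (1/2)(1 + λ·i·m_x) for each i ∈ {±1}, Σ_{i,k} Tr[π_{[i,j,k]} (ρ_m ⊗ ρ_{−m})] = (1/2)(1 + λ·j·m_y) for each j ∈ {±1}, and Σ_{i,j} Tr[π_{[i,j,k]} (ρ_m ⊗ ρ_{−m})] = (1/2)(1 + λ·k·m_z) for each k ∈ {±1}. -/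

import Mathlib

open Matrix Complex
open scoped Kronecker Matrix ComplexOrder

noncomputable section

/-- Pauli matrix σ_x. -/
def σx : Matrix (Fin 2) (Fin 2) ℂ := !![0, 1; 1, 0]
/-- Pauli matrix σ_y. -/
def σy : Matrix (Fin 2) (Fin 2) ℂ := !![0, -Complex.I; Complex.I, 0]
/-- Pauli matrix σ_z. -/
def σz : Matrix (Fin 2) (Fin 2) ℂ := !![1, 0; 0, -1]

/-- The two-element set {+1, -1} of outcomes/signs. -/
def pm : Finset ℝ := {1, -1}

/-- Qubit state with Bloch vector m: ρ_m = (1/2)(I + m·σ). -/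
def rho (m : Fin 3 → ℝ) : Matrix (Fin 2) (Fin 2) ℂ :=
  (2 : ℂ)⁻¹ • ((1 : Matrix (Fin 2) (Fin 2) ℂ) + (m 0 : ℂ) • σx + (m 1 : ℂ) • σy + (m 2 : ℂ) • σz)

/-- The antiparallel-configuration effects Π↑↓_{[i,j,k]}. -/
def PiAnti (i j k : ℝ) : Matrix (Fin 2 × Fin 2) (Fin 2 × Fin 2) ℂ :=
  (16 : ℂ)⁻¹ • ((2 : ℂ) • (1 : Matrix (Fin 2 × Fin 2) (Fin 2 × Fin 2) ℂ)
    + (i : ℂ) • (σx ⊗ₖ (1 : Matrix (Fin 2) (Fin 2) ℂ) - (1 : Matrix (Fin 2) (Fin 2) ℂ) ⊗ₖ σx)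
    + (j : ℂ) • (σy ⊗ₖ (1 : Matrix (Fin 2) (Fin 2) ℂ) - (1 : Matrix (Fin 2) (Fin 2) ℂ) ⊗ₖ σy)
    + (k : ℂ) • (σz ⊗ₖ (1 : Matrix (Fin 2) (Fin 2) ℂ) - (1 : Matrix (Fin 2) (Fin 2) ℂ) ⊗ₖ σz)
    - ((i * j : ℝ) : ℂ) • (σx ⊗ₖ σy + σy ⊗ₖ σx)
    - ((j * k : ℝ) : ℂ) • (σy ⊗ₖ σz + σz ⊗ₖ σy)
    - ((k * i : ℝ) : ℂ) • (σz ⊗ₖ σx + σx ⊗ₖ σz))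

/-- The GPT effects Π#_{[i,j,k]}. -/
def PiSharp (i j k : ℝ) : Matrix (Fin 2 × Fin 2) (Fin 2 × Fin 2) ℂ :=
  (16 : ℂ)⁻¹ • ((2 : ℂ) • (1 : Matrix (Fin 2 × Fin 2) (Fin 2 × Fin 2) ℂ)
    + (i : ℂ) • (σx ⊗ₖ (1 : Matrix (Fin 2) (Fin 2) ℂ) + (1 : Matrix (Fin 2) (Fin 2) ℂ) ⊗ₖ σx)
    + (j : ℂ) • (σy ⊗ₖ (1 : Matrix (Fin 2) (Fin 2) ℂ) + (1 : Matrix (Fin 2) (Fin 2) ℂ) ⊗ₖ σy)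
    + (k : ℂ) • (σz ⊗ₖ (1 : Matrix (Fin 2) (Fin 2) ℂ) + (1 : Matrix (Fin 2) (Fin 2) ℂ) ⊗ₖ σz)
    + ((i * j : ℝ) : ℂ) • (σx ⊗ₖ σy + σy ⊗ₖ σx)
    + ((j * k : ℝ) : ℂ) • (σy ⊗ₖ σz + σz ⊗ₖ σy)
    + ((k * i : ℝ) : ℂ) • (σz ⊗ₖ σx + σx ⊗ₖ σz))

end

noncomputable section

/-- The parallel-configuration effects Π↑↑_{[i,j,k]} of Carmeli et al. -/
def PiPar (i j k : ℝ) : Matrix (Fin 2 × Fin 2) (Fin 2 × Fin 2) ℂ :=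
  (32 : ℂ)⁻¹ • ((4 : ℂ) • (1 : Matrix (Fin 2 × Fin 2) (Fin 2 × Fin 2) ℂ)
    + ((Real.sqrt 3 * i : ℝ) : ℂ) • (σx ⊗ₖ (1 : Matrix (Fin 2) (Fin 2) ℂ) + (1 : Matrix (Fin 2) (Fin 2) ℂ) ⊗ₖ σx)
    + ((Real.sqrt 3 * j : ℝ) : ℂ) • (σy ⊗ₖ (1 : Matrix (Fin 2) (Fin 2) ℂ) + (1 : Matrix (Fin 2) (Fin 2) ℂ) ⊗ₖ σy)
    + ((Real.sqrt 3 * k : ℝ) : ℂ) • (σz ⊗ₖ (1 : Matrix (Fin 2) (Fin 2) ℂ) + (1 : Matrix (Fin 2) (Fin 2) ℂ) ⊗ₖ σz)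
    + ((i * j : ℝ) : ℂ) • (σx ⊗ₖ σy + σy ⊗ₖ σx)
    + ((j * k : ℝ) : ℂ) • (σy ⊗ₖ σz + σz ⊗ₖ σy)
    + ((k * i : ℝ) : ℂ) • (σz ⊗ₖ σx + σx ⊗ₖ σz))

/-- The universal spin-flip (transformation) map F(A) = (Tr A)·I − A. -/
def Flip (A : Matrix (Fin 2) (Fin 2) ℂ) : Matrix (Fin 2) (Fin 2) ℂ :=
  A.trace • (1 : Matrix (Fin 2) (Fin 2) ℂ) - A

/-- The map id ⊗ Φ on M₂(ℂ) ⊗ M₂(ℂ), acting as A ⊗ B ↦ A ⊗ Φ(B) extended linearly. -/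
def idTensor (Φ : Matrix (Fin 2) (Fin 2) ℂ → Matrix (Fin 2) (Fin 2) ℂ)
    (M : Matrix (Fin 2 × Fin 2) (Fin 2 × Fin 2) ℂ) : Matrix (Fin 2 × Fin 2) (Fin 2 × Fin 2) ℂ :=
  Matrix.of fun p q => Φ (Matrix.of fun b d => M (p.1, b) (q.1, d)) p.2 q.2

/-- Choi matrix Σ_{k,l} E_{kl} ⊗ Λ(E_{kl}) of a linear map Λ on M₂(ℂ). -/
def Choi (Λ : Matrix (Fin 2) (Fin 2) ℂ →ₗ[ℂ] Matrix (Fin 2) (Fin 2) ℂ) :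
    Matrix (Fin 2 × Fin 2) (Fin 2 × Fin 2) ℂ :=
  ∑ k : Fin 2, ∑ l : Fin 2,
    (Matrix.single k l (1 : ℂ)) ⊗ₖ Λ (Matrix.single k l (1 : ℂ))

/-- Sign value of a Boolean outcome: true ↦ +1, false ↦ −1. -/
def sgn (b : Bool) : ℝ := if b then 1 else -1

/-- Unsharp spin effect P^a_{n̂,λ} = (1/2)(I + λ a n̂·σ). -/
def Peff (n : Fin 3 → ℝ) (lam a : ℝ) : Matrix (Fin 2) (Fin 2) ℂ :=
  (2 : ℂ)⁻¹ • ((1 : Matrix (Fin 2) (Fin 2) ℂ)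
    + ((lam * a * n 0 : ℝ) : ℂ) • σx + ((lam * a * n 1 : ℝ) : ℂ) • σy
    + ((lam * a * n 2 : ℝ) : ℂ) • σz)

/-- Computational basis vector |ab⟩ of ℂ²⊗ℂ². -/
def ket (a b : Fin 2) : Fin 2 × Fin 2 → ℂ := fun p => if p = (a, b) then 1 else 0

/-- Bell vector |φ⁺⟩. -/
def phiP : Fin 2 × Fin 2 → ℂ := ((Real.sqrt 2 : ℝ) : ℂ)⁻¹ • (ket 0 0 + ket 1 1)
/-- Bell vector |φ⁻⟩. -/
def phiM : Fin 2 × Fin 2 → ℂ := ((Real.sqrt 2 : ℝ) : ℂ)⁻¹ • (ket 0 0 - ket 1 1)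
/-- Bell vector |ψ⁺⟩. -/
def psiP : Fin 2 × Fin 2 → ℂ := ((Real.sqrt 2 : ℝ) : ℂ)⁻¹ • (ket 0 1 + ket 1 0)
/-- Bell vector |ψ⁻⟩. -/
def psiM : Fin 2 × Fin 2 → ℂ := ((Real.sqrt 2 : ℝ) : ℂ)⁻¹ • (ket 0 1 - ket 1 0)

/-- The vector |ξ_{[i,j,k]}⟩ = (1/2)(|ψ⁻⟩ − i|φ⁻⟩ + 𝐢 j|φ⁺⟩ + k|ψ⁺⟩). -/
def xi (i j k : ℝ) : Fin 2 × Fin 2 → ℂ :=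
  (2 : ℂ)⁻¹ • (psiM - (i : ℂ) • phiM + (Complex.I * (j : ℂ)) • phiP + (k : ℂ) • psiP)

end

/-!
`PiAnti i j k = ½ |xi i j k⟩⟨xi i j k|` is positive semidefinite, and the eight effects sum to
the identity because every term odd in a sign cancels. On `ρ_m ⊗ ρ_{-m}` the effect `PiAnti i j k`
has probability `(1 + i m_x + j m_y + k m_z + ij m_x m_y + jk m_y m_z + ki m_z m_x) / 8`, whose
marginals are the sharp spin statistics `(1 + i m_x) / 2`, etc. Mixing with the uniform POVM
`1 / 8` with weight `1 - λ` scales every bias by `λ`, which gives the unsharp observables.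
-/

lemma sum_pm {M : Type*} [AddCommMonoid M] (f : ℝ → M) : ∑ x ∈ pm, f x = f 1 + f (-1) := by
  rw [pm, Finset.sum_insert (by norm_num), Finset.sum_singleton]

lemma card_pm : pm.card = 2 := by
  rw [pm, Finset.card_pair (by norm_num)]

lemma sq_eq_one_of_mem_pm {x : ℝ} (hx : x ∈ pm) : x ^ 2 = 1 := by
  rcases Finset.mem_insert.mp hx with rfl | hx
  · norm_num
  · rw [Finset.mem_singleton.mp hx]; norm_num

lemma trace_rho (m : Fin 3 → ℝ) : (rho m).trace = 1 := by
  simp [rho, σx, σy, σz, trace_fin_two]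

lemma PiAnti_eq_vecMulVec_xi {i j k : ℝ} (hi : i ^ 2 = 1) (hj : j ^ 2 = 1) (hk : k ^ 2 = 1) :
    PiAnti i j k = (2⁻¹ : ℝ) • vecMulVec (xi i j k) (star (xi i j k)) := by
  have hsqrt : (Real.sqrt 2)⁻¹ ^ 2 = 2⁻¹ := by rw [inv_pow, Real.sq_sqrt zero_le_two]
  ext ⟨a, b⟩ ⟨c, d⟩
  fin_cases a <;> fin_cases b <;> fin_cases c <;> fin_cases d <;>
    simp [PiAnti, xi, psiM, psiP, phiM, phiP, ket, σx, σy, σz, vecMulVec_apply, one_apply,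
      Complex.ext_iff] <;> grind

lemma posSemidef_PiAnti {i j k : ℝ} (hi : i ^ 2 = 1) (hj : j ^ 2 = 1) (hk : k ^ 2 = 1) :
    (PiAnti i j k).PosSemidef := by
  rw [PiAnti_eq_vecMulVec_xi hi hj hk]
  exact (posSemidef_vecMulVec_self_star _).smul (by norm_num)

lemma sum_PiAnti : ∑ i ∈ pm, ∑ j ∈ pm, ∑ k ∈ pm, PiAnti i j k = 1 := by
  simp only [sum_pm, PiAnti]
  push_cast
  module

lemma trace_PiAnti_mul_kronecker_rho_neg (i j k : ℝ) (m : Fin 3 → ℝ) :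
    (PiAnti i j k * (rho m ⊗ₖ rho (-m))).trace
      = (((1 + i * m 0 + j * m 1 + k * m 2
          + i * j * m 0 * m 1 + j * k * m 1 * m 2 + k * i * m 2 * m 0) / 8 : ℝ) : ℂ) := by
  simp only [trace, PiAnti, σx, coe_smul, σy, σz, ofReal_mul, smul_add, rho, Fin.isValue, smul_of,
    smul_cons, smul_eq_mul, mul_zero, mul_one, smul_empty, mul_neg, Pi.neg_apply, ofReal_neg,
    neg_smul, neg_of, neg_cons, neg_zero, neg_empty, neg_neg, Algebra.smul_mul_assoc, diag_apply,
    Matrix.smul_apply, mul_apply, Matrix.sub_apply, Matrix.add_apply, one_apply, mul_ite,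
    kroneckerMap_apply, of_apply, cons_val', cons_val_fin_one, ite_mul, one_mul, zero_mul,
    real_smul, Fintype.sum_prod_type, Fin.sum_univ_two, cons_val_zero, cons_val_one,
    Prod.mk.injEq, and_true, ↓reduceIte, ite_self, sub_zero, add_zero, zero_add, zero_ne_one,
    and_false, zero_sub, sub_self, sub_neg_eq_add, one_ne_zero, neg_add_rev, add_neg_cancel,
    neg_add_cancel, neg_mul, ofReal_div, ofReal_add, ofReal_one, ofReal_ofNat]
  ring_nf
  rw [Complex.I_sq]
  ring

noncomputable def PiAntiNoisy (lam i j k : ℝ) : Matrix (Fin 2 × Fin 2) (Fin 2 × Fin 2) ℂ :=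
  lam • PiAnti i j k + ((1 - lam) / 8) • 1

lemma posSemidef_PiAntiNoisy {lam i j k : ℝ} (hlam : lam ∈ Set.Icc (0 : ℝ) 1)
    (hi : i ^ 2 = 1) (hj : j ^ 2 = 1) (hk : k ^ 2 = 1) : (PiAntiNoisy lam i j k).PosSemidef :=
  ((posSemidef_PiAnti hi hj hk).smul hlam.1).add
    (PosSemidef.one.smul (div_nonneg (sub_nonneg.mpr hlam.2) (by norm_num)))

lemma sum_PiAntiNoisy (lam : ℝ) : ∑ i ∈ pm, ∑ j ∈ pm, ∑ k ∈ pm, PiAntiNoisy lam i j k = 1 := by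
  simp only [PiAntiNoisy, Finset.sum_add_distrib, ← Finset.smul_sum, sum_PiAnti,
    Finset.sum_const, card_pm]
  module

lemma trace_PiAntiNoisy_mul_kronecker_rho_neg (lam i j k : ℝ) (m : Fin 3 → ℝ) :
    (PiAntiNoisy lam i j k * (rho m ⊗ₖ rho (-m))).trace
      = ((lam * ((1 + i * m 0 + j * m 1 + k * m 2
          + i * j * m 0 * m 1 + j * k * m 1 * m 2 + k * i * m 2 * m 0) / 8)
          + (1 - lam) / 8 : ℝ) : ℂ) := by
  rw [PiAntiNoisy, add_mul, smul_mul, smul_mul, one_mul, trace_add, trace_smul, trace_smul,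
    trace_PiAnti_mul_kronecker_rho_neg, trace_kronecker, trace_rho, trace_rho]
  simp

/-- Theorem 1: X^λ, Y^λ, Z^λ are jointly measurable on antiparallel
spin pairs for every λ ∈ [0,1]. -/
theorem jointly_measurable_antiparallel (lam : ℝ) (hlam : lam ∈ Set.Icc (0 : ℝ) 1) :
    ∃ π : ℝ → ℝ → ℝ → Matrix (Fin 2 × Fin 2) (Fin 2 × Fin 2) ℂ,
      (∀ i ∈ pm, ∀ j ∈ pm, ∀ k ∈ pm, (π i j k).PosSemidef) ∧
      (∑ i ∈ pm, ∑ j ∈ pm, ∑ k ∈ pm, π i j k = 1) ∧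
      ∀ m : Fin 3 → ℝ, m 0 ^ 2 + m 1 ^ 2 + m 2 ^ 2 ≤ 1 →
        (∀ i ∈ pm, ∑ j ∈ pm, ∑ k ∈ pm, (π i j k * (rho m ⊗ₖ rho (-m))).trace
            = ((1 / 2 * (1 + lam * i * m 0) : ℝ) : ℂ)) ∧
        (∀ j ∈ pm, ∑ i ∈ pm, ∑ k ∈ pm, (π i j k * (rho m ⊗ₖ rho (-m))).trace
            = ((1 / 2 * (1 + lam * j * m 1) : ℝ) : ℂ)) ∧
        (∀ k ∈ pm, ∑ i ∈ pm, ∑ j ∈ pm, (π i j k * (rho m ⊗ₖ rho (-m))).trace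
            = ((1 / 2 * (1 + lam * k * m 2) : ℝ) : ℂ)) := by
  refine ⟨PiAntiNoisy lam, fun i hi j hj k hk => ?_, sum_PiAntiNoisy lam, fun m _ => ?_⟩
  · exact posSemidef_PiAntiNoisy hlam (sq_eq_one_of_mem_pm hi) (sq_eq_one_of_mem_pm hj)
      (sq_eq_one_of_mem_pm hk)
  · refine ⟨?_, ?_, ?_⟩ <;> intro a _ <;>
      simp only [sum_pm, trace_PiAntiNoisy_mul_kronecker_rho_neg] <;> push_cast <;> ring
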